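/- Let S be any nonempty set, and for each s ∈ S and m ∈ {1,…,M} let q_{m,j}(s) ∈ ℂ (j ∈ {1,…,M}) be given, with σ > 0. Define c_m(s) = Σ_{j≠m} |q_{m,j}(s)|² + σ², Γ_m(s) = |q_{m,m}(s)|²/c_m(s), and e_m(s, δ) = |1 − δ·q_{m,m}(s)|² + |δ|²·c_m(s). If the supremum over s ∈ S of Σ_m log(1 + Γ_m(s)) is finite, then sup_{s ∈ S} Σ_{m=1}^M log(1 + Γ_m(s)) = − inf_{s ∈ S, δ ∈ ℂ^M, ω ∈ (0,∞)^M} Σ_{m=1}^M (ω_m·e_m(s, δ_m) − log ω_m − 1), and s* attains the supremum if and only if there exist δ*, ω* such that (s*, δ*, ω*) attains the infimum. -/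

import Mathlib

/-!
Per user, the MSE of any receive coefficient is at least `c / (|a|² + c) = 1 / (1 + Γ)`, with
equality at the MMSE receiver `δ = conj a / (|a|² + c)`; and `log t ≤ ω t - log ω - 1` for
`ω, t > 0`, with equality at `ω = 1 / t`. Hence for every design `s` the inner minimum of the
WMMSE objective over `(δ, ω)` is exactly `-R s`, and both claims follow by minimising over `s`
last.
-/

open Finset ComplexConjugate

/-- MSE of the receive coefficient `δ` for a channel gain `a` and interference-plus-noise power
`c`. -/
noncomputable def mse (a : ℂ) (c : ℝ) (δ : ℂ) : ℝ := ‖1 - δ * a‖ ^ 2 + ‖δ‖ ^ 2 * c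

noncomputable def mmseReceiver (a : ℂ) (c : ℝ) : ℂ := conj a / ((‖a‖ ^ 2 + c : ℝ) : ℂ)

lemma div_le_mse (a δ : ℂ) {c : ℝ} (hc : 0 < c) : c / (‖a‖ ^ 2 + c) ≤ mse a c δ := by
  have hre : (1 - ‖δ‖ * ‖a‖) ^ 2 ≤ ‖1 - δ * a‖ ^ 2 := by
    obtain ⟨hlo, hhi⟩ := abs_le.mp (abs_norm_sub_norm_le 1 (δ * a))
    rw [norm_one, norm_mul] at hlo hhi
    exact sq_le_sq' hlo hhi
  -- `(b² + c) ((1 - r b)² + r² c) - c = (b - r (b² + c))²` with `b = ‖a‖`, `r = ‖δ‖`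
  rw [mse, div_le_iff₀ (by positivity)]
  nlinarith [sq_nonneg (‖a‖ - ‖δ‖ * (‖a‖ ^ 2 + c)), norm_nonneg a, norm_nonneg δ]

lemma mse_mmseReceiver (a : ℂ) {c : ℝ} (hc : 0 < c) :
    mse a c (mmseReceiver a c) = c / (‖a‖ ^ 2 + c) := by
  have hpos : 0 < ‖a‖ ^ 2 + c := by positivity
  have hne : ((‖a‖ ^ 2 + c : ℝ) : ℂ) ≠ 0 := by exact_mod_cast hpos.ne'
  have hres : 1 - mmseReceiver a c * a = ((c / (‖a‖ ^ 2 + c) : ℝ) : ℂ) := by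
    rw [mmseReceiver, div_mul_eq_mul_div, mul_comm, Complex.mul_conj, Complex.normSq_eq_norm_sq,
      Complex.ofReal_div, eq_div_iff hne, sub_mul, div_mul_cancel₀ _ hne]
    push_cast
    ring
  rw [mse, hres, mmseReceiver, norm_div, Complex.norm_conj, Complex.norm_real, Complex.norm_real,
    Real.norm_of_nonneg hpos.le, Real.norm_of_nonneg (by positivity)]
  field_simp
  ring

lemma log_le_mul_sub_log_sub_one {t ω : ℝ} (ht : 0 < t) (hω : 0 < ω) :
    Real.log t ≤ ω * t - Real.log ω - 1 := by
  have h := Real.log_le_sub_one_of_pos (mul_pos hω ht)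
  rw [Real.log_mul hω.ne' ht.ne'] at h
  linarith

lemma neg_log_one_add_sinr_le (a δ : ℂ) {c ω : ℝ} (hc : 0 < c) (hω : 0 < ω) :
    -Real.log (1 + ‖a‖ ^ 2 / c) ≤ ω * mse a c δ - Real.log ω - 1 := by
  have hpos : 0 < c / (‖a‖ ^ 2 + c) := by positivity
  calc -Real.log (1 + ‖a‖ ^ 2 / c) = Real.log (c / (‖a‖ ^ 2 + c)) := by
        rw [one_add_div hc.ne', add_comm c, ← Real.log_inv, inv_div]
    _ ≤ Real.log (mse a c δ) := Real.log_le_log hpos (div_le_mse a δ hc)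
    _ ≤ ω * mse a c δ - Real.log ω - 1 :=
        log_le_mul_sub_log_sub_one (hpos.trans_le (div_le_mse a δ hc)) hω

lemma weighted_mse_mmseReceiver (a : ℂ) {c : ℝ} (hc : 0 < c) :
    (1 + ‖a‖ ^ 2 / c) * mse a c (mmseReceiver a c) - Real.log (1 + ‖a‖ ^ 2 / c) - 1 =
      -Real.log (1 + ‖a‖ ^ 2 / c) := by
  have hpos : 0 < ‖a‖ ^ 2 + c := by positivity
  rw [mse_mmseReceiver a hc, one_add_div hc.ne', add_comm c, div_mul_div_cancel₀ hc.ne',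
    div_self hpos.ne']
  ring

section PartialMinimization

variable {S β γ : Type*} {R : S → ℝ} {G : S → β → γ → ℝ} {P : γ → Prop}

lemma sSup_range_eq_neg_sInf [Nonempty S] (hle : ∀ s b w, P w → -R s ≤ G s b w)
    (hattain : ∀ s, ∃ b w, P w ∧ G s b w = -R s) (hbdd : BddAbove (Set.range R)) :
    sSup (Set.range R) = -sInf {y | ∃ s b w, P w ∧ y = G s b w} := by
  set T := {y | ∃ s b w, P w ∧ y = G s b w}
  have hmem : ∀ s, -R s ∈ T := fun s => by
    obtain ⟨b, w, hw, hG⟩ := hattain s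
    exact ⟨s, b, w, hw, hG.symm⟩
  have hlower : ∀ y ∈ T, -sSup (Set.range R) ≤ y := by
    rintro y ⟨s, b, w, hw, rfl⟩
    linarith [le_csSup hbdd ⟨s, rfl⟩, hle s b w hw]
  have hbddT : BddBelow T := ⟨_, hlower⟩
  suffices sInf T = -sSup (Set.range R) by rw [this, neg_neg]
  refine le_antisymm ?_ (le_csInf ⟨_, hmem (Classical.arbitrary S)⟩ hlower)
  rw [le_neg]
  refine csSup_le (Set.range_nonempty R) ?_
  rintro _ ⟨s, rfl⟩
  linarith [csInf_le hbddT (hmem s)]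

lemma isMax_iff_isMin (hle : ∀ s b w, P w → -R s ≤ G s b w)
    (hattain : ∀ s, ∃ b w, P w ∧ G s b w = -R s) (sstar : S) :
    (∀ s, R s ≤ R sstar) ↔
      ∃ bstar wstar, P wstar ∧ ∀ s b w, P w → G sstar bstar wstar ≤ G s b w := by
  constructor
  · intro hmax
    obtain ⟨bstar, wstar, hw, hG⟩ := hattain sstar
    exact ⟨bstar, wstar, hw, fun s b w hw' => by linarith [hmax s, hle s b w hw']⟩
  · rintro ⟨bstar, wstar, hw, hmin⟩ s
    obtain ⟨b, w, hw', hG⟩ := hattain s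
    linarith [hmin s b w hw', hle sstar bstar wstar hw]

end PartialMinimization

theorem stmt_4_general {S : Type*} [Nonempty S] (M : ℕ)
    (q : S → Fin M → Fin M → ℂ) (σ : ℝ) (hσ : 0 < σ)
    (c : S → Fin M → ℝ)
    (hc : ∀ s m, c s m = ∑ j ∈ univ.erase m, ‖q s m j‖ ^ 2 + σ ^ 2)
    (Γ : S → Fin M → ℝ) (hΓ : ∀ s m, Γ s m = ‖q s m m‖ ^ 2 / c s m)
    (e : S → Fin M → ℂ → ℝ)
    (he : ∀ s m δ, e s m δ = ‖1 - δ * q s m m‖ ^ 2 + ‖δ‖ ^ 2 * c s m)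
    (R : S → ℝ) (hR : ∀ s, R s = ∑ m, Real.log (1 + Γ s m))
    (g : S → (Fin M → ℂ) → (Fin M → ℝ) → ℝ)
    (hg : ∀ s δ ω, g s δ ω = ∑ m, (ω m * e s m (δ m) - Real.log (ω m) - 1))
    (hfin : BddAbove (Set.range R)) :
    sSup (Set.range R) =
      -sInf {y : ℝ | ∃ (s : S) (δ : Fin M → ℂ) (ω : Fin M → ℝ),
        (∀ m, 0 < ω m) ∧ y = g s δ ω} ∧
    ∀ sstar : S,
      ((∀ s : S, R s ≤ R sstar) ↔
        ∃ (δstar : Fin M → ℂ) (ωstar : Fin M → ℝ),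
          (∀ m, 0 < ωstar m) ∧
          ∀ (s : S) (δ : Fin M → ℂ) (ω : Fin M → ℝ), (∀ m, 0 < ω m) →
            g sstar δstar ωstar ≤ g s δ ω) := by
  have hc0 : ∀ s m, 0 < c s m := fun s m => by
    rw [hc]
    exact add_pos_of_nonneg_of_pos (sum_nonneg fun j _ => by positivity) (by positivity)
  have hg' : ∀ s δ ω, g s δ ω = ∑ m, (ω m * mse (q s m m) (c s m) (δ m) - Real.log (ω m) - 1) :=
    fun s δ ω => by simp only [hg, he, mse]
  have hR' : ∀ s, -R s = ∑ m, -Real.log (1 + ‖q s m m‖ ^ 2 / c s m) := fun s => by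
    simp only [hR, hΓ, sum_neg_distrib]
  have hle : ∀ s δ ω, (∀ m, 0 < ω m) → -R s ≤ g s δ ω := fun s δ ω hω => by
    rw [hR', hg']
    exact sum_le_sum fun m _ => neg_log_one_add_sinr_le _ _ (hc0 s m) (hω m)
  have hattain : ∀ s, ∃ δ ω, (∀ m, 0 < ω m) ∧ g s δ ω = -R s := fun s =>
    ⟨fun m => mmseReceiver (q s m m) (c s m), fun m => 1 + ‖q s m m‖ ^ 2 / c s m,
      fun m => by have := hc0 s m; positivity, by
        rw [hR', hg']
        exact sum_congr rfl fun m _ => weighted_mse_mmseReceiver _ (hc0 s m)⟩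
  exact ⟨sSup_range_eq_neg_sInf hle hattain hfin, isMax_iff_isMin hle hattain⟩

/-- Theorem 1 of the paper, in abstract form. `S` is the (nonempty) set of feasible joint
designs, `q s m j` the effective coefficients, `σ > 0` the noise level. With
`c s m = ∑_{j≠m} |q s m j|² + σ²`, `Γ s m = |q s m m|²/(c s m)`,
`e s m δ = |1 − δ·q s m m|² + |δ|²·c s m`, the sum rate `R s = ∑ m log(1 + Γ s m)` and
the weighted-MMSE objective `g s δ ω = ∑ m (ω m · e s m (δ m) − log (ω m) − 1)`: if the
supremum of `R` is finite then `sup R = − inf g` (infimum over `s`, `δ`, and positive `ω`),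
and `s*` attains the supremum iff some `(s*, δ*, ω*)` attains the infimum. -/
theorem stmt_4 {S : Type*} [Nonempty S] (M : ℕ) (hM : 1 ≤ M)
    (q : S → Fin M → Fin M → ℂ) (σ : ℝ) (hσ : 0 < σ)
    (c : S → Fin M → ℝ)
    (hc : ∀ s m, c s m = ∑ j ∈ univ.erase m, ‖q s m j‖ ^ 2 + σ ^ 2)
    (Γ : S → Fin M → ℝ) (hΓ : ∀ s m, Γ s m = ‖q s m m‖ ^ 2 / c s m)
    (e : S → Fin M → ℂ → ℝ)
    (he : ∀ s m δ, e s m δ = ‖1 - δ * q s m m‖ ^ 2 + ‖δ‖ ^ 2 * c s m)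
    (R : S → ℝ) (hR : ∀ s, R s = ∑ m, Real.log (1 + Γ s m))
    (g : S → (Fin M → ℂ) → (Fin M → ℝ) → ℝ)
    (hg : ∀ s δ ω, g s δ ω = ∑ m, (ω m * e s m (δ m) - Real.log (ω m) - 1))
    (hfin : BddAbove (Set.range R)) :
    sSup (Set.range R) =
      -sInf {y : ℝ | ∃ (s : S) (δ : Fin M → ℂ) (ω : Fin M → ℝ),
        (∀ m, 0 < ω m) ∧ y = g s δ ω} ∧
    ∀ sstar : S,
      ((∀ s : S, R s ≤ R sstar) ↔
        ∃ (δstar : Fin M → ℂ) (ωstar : Fin M → ℝ),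
          (∀ m, 0 < ωstar m) ∧
          ∀ (s : S) (δ : Fin M → ℂ) (ω : Fin M → ℝ), (∀ m, 0 < ω m) →
            g sstar δstar ωstar ≤ g s δ ω) :=
  stmt_4_general M q σ hσ c hc Γ hΓ e he R hR g hg hfin
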